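/- Let H be a graded connected commutative Hopf algebra over ℚ, let K be the ring of Laurent series, and let T : K → K be a linear projection onto the strictly negative-degree part satisfying the Rota–Baxter identity T(a)T(b) = T(T(a)b) + T(a T(b)) − T(ab). If φ : H → K is an algebra homomorphism, then the map φ₋ defined recursively by φ₋(1) = 1 and φ₋(x) = −T[φ(x) + ∑ φ₋(x')φ(x'')] (sum over the reduced coproduct) is an algebra homomorphism. -/

import Mathlib

open TensorProduct

/-- The image `p ⊗ q` of two submodules inside the tensor product. -/
noncomputable def subTensor {R M N : Type*} [CommRing R] [AddCommGroup M] [Module R M]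
    [AddCommGroup N] [Module R N] (p : Submodule R M) (q : Submodule R N) :
    Submodule R (M ⊗[R] N) :=
  LinearMap.range (TensorProduct.mapIncl p q)

/-!
Write `X = Δx - x ⊗ 1`. For `x` of degree `n`, connectedness and the counit axiom show that the
left tensor factors of `X` have degree `< n`, and the recursion reads `φ₋(x) = -T(Ψ X)` with
`Ψ(a ⊗ b) = φ₋(a) φ(b)`. Since `Δ` is multiplicative,
`Δ(xy) - xy ⊗ 1 = (x ⊗ 1) Y + X (y ⊗ 1) + X Y`, and by induction on total degree `Ψ` is
multiplicative on each of these three products. With `A = Ψ X`, `B = Ψ Y` this gives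
`φ₋(xy) = -T(-T(A) B - A T(B) + A B) = T(A) T(B) = φ₋(x) φ₋(y)`
by the Rota–Baxter identity.
-/

section SubTensor

variable {R M N : Type*} [CommRing R] [AddCommGroup M] [Module R M] [AddCommGroup N] [Module R N]
  {p p' : Submodule R M} {q q' : Submodule R N}

theorem subTensor_induction {P : M ⊗[R] N → Prop} (zero : P 0)
    (add : ∀ a b, P a → P b → P (a + b)) (tmul : ∀ u ∈ p, ∀ v ∈ q, P (u ⊗ₜ[R] v))
    {t : M ⊗[R] N} (ht : t ∈ subTensor p q) : P t := by
  obtain ⟨t, rfl⟩ := ht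
  induction t using TensorProduct.induction_on with
  | zero => simpa using zero
  | tmul u v => exact tmul u u.2 v v.2
  | add a b ha hb => rw [map_add]; exact add _ _ ha hb

theorem tmul_mem_subTensor {u : M} {v : N} (hu : u ∈ p) (hv : v ∈ q) :
    u ⊗ₜ[R] v ∈ subTensor p q :=
  ⟨⟨u, hu⟩ ⊗ₜ ⟨v, hv⟩, rfl⟩

theorem subTensor_mono (hp : p ≤ p') (hq : q ≤ q') : subTensor p q ≤ subTensor p' q' := by
  intro t ht
  exact subTensor_induction (zero_mem _) (fun _ _ => add_mem)
    (fun u hu v hv => tmul_mem_subTensor (hp hu) (hq hv)) ht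

theorem rid_lTensor_mem_of_mem_subTensor (g : N →ₗ[R] R) {t : M ⊗[R] N}
    (ht : t ∈ subTensor p q) : TensorProduct.rid R M (g.lTensor M t) ∈ p :=
  subTensor_induction (P := fun t => TensorProduct.rid R M (g.lTensor M t) ∈ p) (by simp)
    (fun _ _ ha hb => by simpa using add_mem ha hb)
    (fun u hu v _ => by simpa using p.smul_mem (g v) hu) ht

end SubTensor

theorem exists_eq_tmul_one_of_mem_subTensor_span_one {R A N : Type*} [CommRing R] [Ring A]
    [Algebra R A] [AddCommGroup N] [Module R N] {p : Submodule R N} {t : N ⊗[R] A}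
    (ht : t ∈ subTensor p (Submodule.span R {1})) : ∃ z ∈ p, t = z ⊗ₜ[R] 1 := by
  refine subTensor_induction (P := fun t => ∃ z ∈ p, t = z ⊗ₜ[R] 1)
    ⟨0, p.zero_mem, (zero_tmul _ _).symm⟩ ?_ ?_ ht
  · rintro _ _ ⟨z, hz, rfl⟩ ⟨z', hz', rfl⟩
    exact ⟨z + z', p.add_mem hz hz', (add_tmul _ _ _).symm⟩
  · intro u hu v hv
    obtain ⟨c, rfl⟩ := Submodule.mem_span_singleton.mp hv
    exact ⟨c • u, p.smul_mem c hu, by rw [smul_tmul]⟩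

theorem neg_rotaBaxter_mul {R K : Type*} [CommSemiring R] [Ring K] [Module R K] (T : K →ₗ[R] K)
    (hT : ∀ a b : K, T a * T b + T (a * b) = T (T a * b) + T (a * T b)) (a b : K) :
    -T a * -T b = -T (-T a * b + a * -T b + a * b) := by
  simp only [neg_mul, mul_neg, map_add, map_neg, neg_neg, eq_sub_of_add_eq (hT a b)]
  abel

section MulOn

variable {R A K : Type*} [CommRing R] [CommRing A] [Algebra R A] [CommRing K] [Algebra R K]

def MulOn (f : A →ₗ[R] K) (p q : Submodule R A) : Prop :=
  ∀ u ∈ p, ∀ v ∈ q, f (u * v) = f u * f v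

variable {f : A →ₗ[R] K} {p q : Submodule R A}

theorem MulOn.symm (h : MulOn f p q) : MulOn f q p := fun u hu v hv => by
  rw [mul_comm, h v hv u hu, mul_comm]

theorem MulOn.iSup_left {ι : Sort*} {p : ι → Submodule R A} (h : ∀ i, MulOn f (p i) q) :
    MulOn f (⨆ i, p i) q := by
  intro u hu
  induction hu using Submodule.iSup_induction' with
  | mem i u hu => exact h i u hu
  | zero => simp
  | add u u' _ _ hu hu' =>
    intro v hv
    rw [add_mul, map_add, map_add, add_mul, hu v hv, hu' v hv]

theorem MulOn.iSup_right {ι : Sort*} {q : ι → Submodule R A} (h : ∀ i, MulOn f p (q i)) :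
    MulOn f p (⨆ i, q i) :=
  (MulOn.iSup_left fun i => (h i).symm).symm

theorem mulOn_span_one (hf : f 1 = 1) (q : Submodule R A) :
    MulOn f (Submodule.span R {1}) q := by
  intro u hu v _
  obtain ⟨c, rfl⟩ := Submodule.mem_span_singleton.mp hu
  simp [hf]

def tensorMul (f g : A →ₗ[R] K) : A ⊗[R] A →ₗ[R] K :=
  LinearMap.mul' R K ∘ₗ TensorProduct.map f g

@[simp]
theorem tensorMul_tmul (f g : A →ₗ[R] K) (a b : A) :
    tensorMul f g (a ⊗ₜ b) = f a * g b := by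
  simp [tensorMul]

theorem add_tensorMul_sub_one_tmul (hf : f 1 = 1) (g : A →ₐ[R] K) (t : A ⊗[R] A) (x : A) :
    g x + tensorMul f g.toLinearMap (t - 1 ⊗ₜ x) = tensorMul f g.toLinearMap t := by
  simp [hf]

theorem MulOn.tensorMul_mul (h : MulOn f p q) (g : A →ₐ[R] K) {p' q' : Submodule R A}
    {s t : A ⊗[R] A} (hs : s ∈ subTensor p p') (ht : t ∈ subTensor q q') :
    tensorMul f g.toLinearMap (s * t) =
      tensorMul f g.toLinearMap s * tensorMul f g.toLinearMap t := by
  refine subTensor_induction (P := fun s => tensorMul f g.toLinearMap (s * t) =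
      tensorMul f g.toLinearMap s * tensorMul f g.toLinearMap t)
    (by simp) (fun a b ha hb => by rw [add_mul, map_add, map_add, add_mul, ha, hb]) ?_ hs
  intro u hu v _
  refine subTensor_induction (P := fun t => tensorMul f g.toLinearMap (u ⊗ₜ v * t) =
      tensorMul f g.toLinearMap (u ⊗ₜ v) * tensorMul f g.toLinearMap t)
    (by simp) (fun a b ha hb => by rw [mul_add, map_add, map_add, mul_add, ha, hb]) ?_ ht
  intro u' hu' v' _
  simp [Algebra.TensorProduct.tmul_mul_tmul, h u hu u' hu']
  ring

end MulOn

theorem comul_sub_tmul_one_mem {R H : Type*} [CommRing R] [Ring H] [Bialgebra R H]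
    {ℬ : ℕ → Submodule R H} [DirectSum.Decomposition ℬ]
    (hconn : ℬ 0 = Submodule.span R {1}) {n : ℕ} {x : H} (hx : x ∈ ℬ n)
    (hΔx : Coalgebra.comul (R := R) x ∈
      ⨆ k ∈ Finset.range (n + 1), subTensor (ℬ k) (ℬ (n - k))) :
    Coalgebra.comul (R := R) x - x ⊗ₜ[R] 1 ∈ subTensor (⨆ k < n, ℬ k) ⊤ := by
  have hsplit : (⨆ k ∈ Finset.range (n + 1), subTensor (ℬ k) (ℬ (n - k))) ≤
      subTensor (ℬ n) (Submodule.span R {1}) ⊔ subTensor (⨆ k < n, ℬ k) ⊤ := by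
    refine iSup₂_le fun k hk => ?_
    rcases (Finset.mem_range_succ_iff.mp hk).eq_or_lt with rfl | hlt
    · rw [Nat.sub_self, hconn]
      exact le_sup_left
    · exact le_sup_of_le_right (subTensor_mono (le_biSup ℬ hlt) le_top)
  obtain ⟨_, ha, r, hr, hsum⟩ := Submodule.mem_sup.mp (hsplit hΔx)
  obtain ⟨z, hz, rfl⟩ := exists_eq_tmul_one_of_mem_subTensor_span_one ha
  have hcounit : z + TensorProduct.rid R H (Coalgebra.counit.lTensor H r) = x := by
    simpa [Coalgebra.lTensor_counit_comul] using
      congrArg (fun t => TensorProduct.rid R H (Coalgebra.counit.lTensor H t)) hsum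
  have hdisj : Disjoint (ℬ n) (⨆ k < n, ℬ k) :=
    (DirectSum.Decomposition.isInternal ℬ).submodule_iSupIndep.disjoint_biSup
      (y := {k | k < n}) (lt_irrefl n)
  have hzx : x - z = 0 := Submodule.disjoint_def.mp hdisj _ (sub_mem hx hz)
    (by rw [← hcounit, add_sub_cancel_left]; exact rid_lTensor_mem_of_mem_subTensor _ hr)
  rw [← hsum, ← sub_eq_zero.mp hzx, add_sub_cancel_left]
  exact hr

section Birkhoff

variable {R H K : Type*} [CommRing R] [CommRing H] [Bialgebra R H] {ℬ : ℕ → Submodule R H}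
  [GradedAlgebra ℬ] [CommRing K] [Algebra R K] {T : K →ₗ[R] K} {φ : H →ₐ[R] K}
  {φm : H →ₗ[R] K}

theorem mulOn_of_mulOn_lt (hconn : ℬ 0 = Submodule.span R {1})
    (hΔ : ∀ n : ℕ, ∀ x ∈ ℬ n, Coalgebra.comul (R := R) x ∈
      ⨆ k ∈ Finset.range (n + 1), subTensor (ℬ k) (ℬ (n - k)))
    (hT : ∀ a b : K, T a * T b + T (a * b) = T (T a * b) + T (a * T b))
    (hrec : ∀ n : ℕ, 0 < n → ∀ x ∈ ℬ n,
      φm x = -T (tensorMul φm φ.toLinearMap (Coalgebra.comul (R := R) x - x ⊗ₜ[R] 1)))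
    {n m : ℕ} (hn : 0 < n) (hm : 0 < m)
    (ih : ∀ a b, a + b < n + m → MulOn φm (ℬ a) (ℬ b)) : MulOn φm (ℬ n) (ℬ m) := by
  intro x hx y hy
  set X := Coalgebra.comul (R := R) x - x ⊗ₜ[R] 1
  set Y := Coalgebra.comul (R := R) y - y ⊗ₜ[R] 1
  have hX : X ∈ subTensor (⨆ k < n, ℬ k) ⊤ := comul_sub_tmul_one_mem hconn hx (hΔ n x hx)
  have hY : Y ∈ subTensor (⨆ k < m, ℬ k) ⊤ := comul_sub_tmul_one_mem hconn hy (hΔ m y hy)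
  have hxY : MulOn φm (ℬ n) (⨆ k < m, ℬ k) :=
    MulOn.iSup_right fun k => MulOn.iSup_right fun hk => ih n k (by omega)
  have hXy : MulOn φm (⨆ k < n, ℬ k) (ℬ m) :=
    MulOn.iSup_left fun k => MulOn.iSup_left fun hk => ih k m (by omega)
  have hXY : MulOn φm (⨆ k < n, ℬ k) (⨆ k < m, ℬ k) :=
    MulOn.iSup_left fun k => MulOn.iSup_left fun hk =>
      MulOn.iSup_right fun j => MulOn.iSup_right fun hj => ih k j (by omega)
  have hexpand : Coalgebra.comul (R := R) (x * y) - (x * y) ⊗ₜ[R] 1 =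
      x ⊗ₜ[R] 1 * Y + X * y ⊗ₜ[R] 1 + X * Y := by
    have hxy1 : (x * y) ⊗ₜ[R] (1 : H) = x ⊗ₜ 1 * y ⊗ₜ 1 := by
      rw [Algebra.TensorProduct.tmul_mul_tmul, one_mul]
    rw [Bialgebra.comul_mul, hxy1]
    simp only [X, Y]
    ring
  have hΨ : tensorMul φm φ.toLinearMap (Coalgebra.comul (R := R) (x * y) - (x * y) ⊗ₜ[R] 1) =
      φm x * tensorMul φm φ.toLinearMap Y + tensorMul φm φ.toLinearMap X * φm y +
        tensorMul φm φ.toLinearMap X * tensorMul φm φ.toLinearMap Y := by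
    rw [hexpand, map_add, map_add,
      hxY.tensorMul_mul φ (tmul_mem_subTensor hx Submodule.mem_top) hY,
      hXy.tensorMul_mul φ hX (tmul_mem_subTensor hy Submodule.mem_top),
      hXY.tensorMul_mul φ hX hY]
    simp
  rw [hrec _ (by omega) _ (SetLike.mul_mem_graded hx hy), hΨ, hrec n hn x hx, hrec m hm y hy]
  exact (neg_rotaBaxter_mul T hT _ _).symm

theorem mulOn_of_birkhoff_recursion (hconn : ℬ 0 = Submodule.span R {1})
    (hΔ : ∀ n : ℕ, ∀ x ∈ ℬ n, Coalgebra.comul (R := R) x ∈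
      ⨆ k ∈ Finset.range (n + 1), subTensor (ℬ k) (ℬ (n - k)))
    (hT : ∀ a b : K, T a * T b + T (a * b) = T (T a * b) + T (a * T b)) (hφm1 : φm 1 = 1)
    (hrec : ∀ n : ℕ, 0 < n → ∀ x ∈ ℬ n,
      φm x = -T (tensorMul φm φ.toLinearMap (Coalgebra.comul (R := R) x - x ⊗ₜ[R] 1)))
    (n m : ℕ) : MulOn φm (ℬ n) (ℬ m) := by
  induction hN : n + m using Nat.strong_induction_on generalizing n m with
  | _ N ih =>
    rcases Nat.eq_zero_or_pos n with rfl | hn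
    · exact hconn ▸ mulOn_span_one hφm1 _
    rcases Nat.eq_zero_or_pos m with rfl | hm
    · exact (hconn ▸ mulOn_span_one hφm1 _).symm
    exact mulOn_of_mulOn_lt hconn hΔ hT hrec hn hm fun a b hab => ih _ (hN ▸ hab) a b rfl

end Birkhoff

theorem birkhoff_counterterm_is_algebra_hom_general {H K : Type*} [CommRing H] [HopfAlgebra ℚ H]
    (ℬ : ℕ → Submodule ℚ H) [GradedAlgebra ℬ]
    (hconn : ℬ 0 = Submodule.span ℚ {(1 : H)})
    (hΔ : ∀ n : ℕ, ∀ x ∈ ℬ n, Coalgebra.comul (R := ℚ) x ∈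
      ⨆ k ∈ Finset.range (n + 1), subTensor (ℬ k) (ℬ (n - k)))
    [CommRing K] [Algebra ℚ K] (T : K →ₗ[ℚ] K)
    (hTRB : ∀ a b : K, T a * T b + T (a * b) = T (T a * b) + T (a * T b))
    (φ : H →ₐ[ℚ] K) (φm : H →ₗ[ℚ] K) (hφm1 : φm 1 = 1)
    (hrec : ∀ n : ℕ, 0 < n → ∀ x ∈ ℬ n,
      φm x = -T (φ x +
        (LinearMap.mul' ℚ K ∘ₗ TensorProduct.map φm φ.toLinearMap)
          (Coalgebra.comul (R := ℚ) x - x ⊗ₜ[ℚ] 1 - 1 ⊗ₜ[ℚ] x))) :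
    ∀ x y : H, φm (x * y) = φm x * φm y := by
  have hrec' : ∀ n : ℕ, 0 < n → ∀ x ∈ ℬ n,
      φm x = -T (tensorMul φm φ.toLinearMap (Coalgebra.comul (R := ℚ) x - x ⊗ₜ[ℚ] 1)) :=
    fun n hn x hx =>
      (hrec n hn x hx).trans <| congrArg (-T ·) (add_tensorMul_sub_one_tmul hφm1 φ _ x)
  have hmul : MulOn φm ⊤ ⊤ := by
    rw [← (DirectSum.Decomposition.isInternal ℬ).submodule_iSup_eq_top]
    exact MulOn.iSup_left fun n => MulOn.iSup_right fun m =>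
      mulOn_of_birkhoff_recursion hconn hΔ hTRB hφm1 hrec' n m
  exact fun x y => hmul x Submodule.mem_top y Submodule.mem_top

/-- Birkhoff decomposition, negative part: let `H` be a graded connected commutative Hopf
algebra over `ℚ`, `K` a commutative `ℚ`-algebra and `T : K → K` an idempotent linear
Rota–Baxter operator of weight `−1`.  If `φ : H → K` is an algebra homomorphism and
`φ₋ : H → K` is the linear map determined by `φ₋(1) = 1` and the recursion
`φ₋(x) = −T[φ(x) + ∑ φ₋(x')φ(x'')]` (sum over the reduced coproduct
`Δ'(x) = Δ(x) − x⊗1 − 1⊗x`) for homogeneous `x` of positive degree, then `φ₋` is an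
algebra homomorphism. -/
theorem birkhoff_counterterm_is_algebra_hom {H K : Type*} [CommRing H] [HopfAlgebra ℚ H]
    (ℬ : ℕ → Submodule ℚ H) [GradedAlgebra ℬ]
    (hconn : ℬ 0 = Submodule.span ℚ {(1 : H)})
    (hΔ : ∀ n : ℕ, ∀ x ∈ ℬ n, Coalgebra.comul (R := ℚ) x ∈
      ⨆ k ∈ Finset.range (n + 1), subTensor (ℬ k) (ℬ (n - k)))
    [CommRing K] [Algebra ℚ K] (T : K →ₗ[ℚ] K)
    (hTidem : ∀ a : K, T (T a) = T a)
    (hTRB : ∀ a b : K, T a * T b + T (a * b) = T (T a * b) + T (a * T b))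
    (φ : H →ₐ[ℚ] K) (φm : H →ₗ[ℚ] K) (hφm1 : φm 1 = 1)
    (hrec : ∀ n : ℕ, 0 < n → ∀ x ∈ ℬ n,
      φm x = -T (φ x +
        (LinearMap.mul' ℚ K ∘ₗ TensorProduct.map φm φ.toLinearMap)
          (Coalgebra.comul (R := ℚ) x - x ⊗ₜ[ℚ] 1 - 1 ⊗ₜ[ℚ] x))) :
    ∀ x y : H, φm (x * y) = φm x * φm y :=
  birkhoff_counterterm_is_algebra_hom_general ℬ hconn hΔ T hTRB φ φm hφm1 hrec
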